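/- Lepowsky branching for Sp(2n) ⊇ Sp(2n−2)×Sp(2): with λ = (a₁,…,aₙ) dominant for Sp(2n) and μ = (b₁,…,bₙ) with b₁ ≥ … ≥ b_{n−1} ≥ 0 and bₙ ≥ 0, and μ supported on at most two fundamental weights ω_i, ω_j (i<j), define A₁ = a₁ − max(a₂,b₁), A_k = min(a_k,b_{k−1}) − max(a_{k+1},b_k) for 2 ≤ k ≤ n−1, A_n = min(aₙ,b_{n−1}). Then the multiplicity m^{G,K}_λ(μ) given by p_Σ(A₁ε₁+⋯+(Aₙ−bₙ)εₙ) − p_Σ(A₁ε₁+⋯+(Aₙ+bₙ+2)εₙ) is at most 1, with equality iff (1) all A_k ≥ 0 for k ≤ n−1, (2) bₙ + Σ A_k is even, and (3) max(max_k A_k, bₙ) ≤ ½(bₙ + Σ A_k). -/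
import Mathlib

open Finset


/-- Partition function of `Σ = {εᵢ ± ε₄ : 1 ≤ i ≤ 3} ⊂ ℤ⁴`: the number of ways to write
`v ∈ ℤ⁴` as an `ℕ`-linear combination of the six vectors `εᵢ + ε₄`, `εᵢ - ε₄` (`i = 1,2,3`). -/
noncomputable def pSigma (v : Fin 4 → ℤ) : ℕ :=
  {c : (Fin 3 → ℕ) × (Fin 3 → ℕ) |
    (c.1 0 : ℤ) + c.2 0 = v 0 ∧ (c.1 1 : ℤ) + c.2 1 = v 1 ∧ (c.1 2 : ℤ) + c.2 2 = v 2 ∧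
      ((c.1 0 : ℤ) - c.2 0) + ((c.1 1 : ℤ) - c.2 1) + ((c.1 2 : ℤ) - c.2 2) = v 3}.ncard



/-- Two-variable count. -/
def t2 (b c : ℕ) (s : ℤ) : ℕ :=
  ((range (b+1) ×ˢ range (c+1)).filter (fun x => 2*((x.1:ℤ)+(x.2:ℤ)) = s)).card

def ncnt (a b c : ℕ) (s : ℤ) : ℕ :=
  ((range (a+1) ×ˢ range (b+1) ×ˢ range (c+1)).filter
    (fun x => 2*((x.1:ℤ)+(x.2.1:ℤ)+(x.2.2:ℤ)) = s)).card

lemma t2_odd (b c : ℕ) (s : ℤ) (h : ¬ (2 ∣ s)) : t2 b c s = 0 := by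
  unfold t2
  rw [Finset.card_eq_zero, Finset.filter_eq_empty_iff]
  intro x _
  intro hx
  exact h ⟨_, hx.symm⟩

lemma t2_val (b c : ℕ) (k : ℤ) :
    t2 b c (2*k) = if 0 ≤ k ∧ k ≤ b + c then
      ((min (b:ℤ) k) - (max 0 (k - c)) + 1).toNat else 0 := by
  unfold t2
  split_ifs with h
  · obtain ⟨hk0, hk1⟩ := h
    set kn := k.toNat with hkn
    have hk : (kn : ℤ) = k := Int.toNat_of_nonneg hk0
    have hset : (range (b+1) ×ˢ range (c+1)).filter (fun x => 2*((x.1:ℤ)+(x.2:ℤ)) = 2*k)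
        = (Finset.Icc (kn - c) (min b kn)).image (fun x => (x, kn - x)) := by
      ext x
      simp only [mem_filter, mem_product, mem_range, mem_image, Finset.mem_Icc, Prod.ext_iff]
      constructor
      · rintro ⟨⟨h1, h2⟩, h3⟩
        refine ⟨x.1, ⟨?_, ?_⟩, rfl, ?_⟩ <;> omega
      · rintro ⟨y, ⟨hy1, hy2⟩, rfl, h2⟩
        refine ⟨⟨?_, ?_⟩, ?_⟩ <;> push_cast <;> omega
    rw [hset, Finset.card_image_of_injective _ (fun x y hxy => (Prod.ext_iff.mp hxy).1),
      Nat.card_Icc]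
    omega
  · rw [Finset.card_eq_zero, Finset.filter_eq_empty_iff]
    intro x hx
    simp only [mem_product, mem_range] at hx
    intro hc
    omega

lemma ncnt_sum (a b c : ℕ) (s : ℤ) :
    ncnt a b c s = ∑ p ∈ range (a+1), t2 b c (s - 2*p) := by
  unfold ncnt t2
  rw [Finset.card_filter, Finset.sum_product]
  refine Finset.sum_congr rfl (fun p _ => ?_)
  rw [Finset.card_filter]
  refine Finset.sum_congr rfl (fun x _ => ?_)
  have : (2 * ((↑(p, x).1:ℤ) + ↑(p, x).2.1 + ↑(p, x).2.2) = s) ↔ (2 * ((x.1:ℤ) + ↑x.2) = s - 2 * ↑p) := by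
    simp only; omega
  simp [this]

lemma tele (a b c : ℕ) (s : ℤ) :
    ncnt a b c s + t2 b c (s+2) = ncnt a b c (s+2) + t2 b c (s - 2*a) := by
  rw [ncnt_sum, ncnt_sum, Finset.sum_range_succ, Finset.sum_range_succ']
  have h1 : ∀ p, t2 b c (s + 2 - 2*((p:ℤ)+1)) = t2 b c (s - 2*p) := by
    intro p; congr 1; push_cast; ring
  simp only [Nat.cast_add, Nat.cast_one, Nat.cast_zero, mul_zero, sub_zero]
  have h2 : ∑ p ∈ range a, t2 b c (s + 2 - 2*(↑p+1)) = ∑ p ∈ range a, t2 b c (s - 2*p) :=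
    Finset.sum_congr rfl (fun p _ => h1 p)
  omega

lemma pSigma_eq (a b c : ℕ) (t : ℤ) :
    pSigma ![(a:ℤ), b, c, t] = ncnt a b c (t + a + b + c) := by
  classical
  unfold pSigma ncnt
  set F := ((range (a+1) ×ˢ range (b+1) ×ˢ range (c+1)).filter
    (fun x => 2*((x.1:ℤ)+(x.2.1:ℤ)+(x.2.2:ℤ)) = t + a + b + c)) with hF
  have hset : {y : (Fin 3 → ℕ) × (Fin 3 → ℕ) |
      (y.1 0 : ℤ) + y.2 0 = (![(a:ℤ), b, c, t]) 0 ∧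
      (y.1 1 : ℤ) + y.2 1 = (![(a:ℤ), b, c, t]) 1 ∧
      (y.1 2 : ℤ) + y.2 2 = (![(a:ℤ), b, c, t]) 2 ∧
      ((y.1 0 : ℤ) - y.2 0) + ((y.1 1 : ℤ) - y.2 1) + ((y.1 2 : ℤ) - y.2 2) = (![(a:ℤ), b, c, t]) 3}
      = ↑(F.image (fun x => (![x.1, x.2.1, x.2.2], ![a - x.1, b - x.2.1, c - x.2.2]))) := by
    ext y
    simp only [Set.mem_setOf_eq, Finset.coe_image, Set.mem_image, Finset.mem_coe, hF,
      mem_filter, mem_product, mem_range, Matrix.cons_val_zero, Matrix.cons_val_one,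
      Matrix.head_cons, Matrix.cons_val_two, Matrix.tail_cons, Matrix.cons_val_three,
      Matrix.head_fin_const]
    constructor
    · rintro ⟨h0, h1, h2, h3⟩
      refine ⟨⟨y.1 0, y.1 1, y.1 2⟩, ⟨⟨?_, ?_, ?_⟩, ?_⟩, ?_⟩ <;> dsimp only
      · omega
      · omega
      · omega
      · push_cast; omega
      · refine Prod.ext ?_ ?_ <;> funext i <;> fin_cases i <;> simp <;> omega
    · rintro ⟨x, ⟨⟨hx1, hx2, hx3⟩, hx4⟩, rfl⟩
      simp only [Matrix.cons_val_zero, Matrix.cons_val_one, Matrix.head_cons,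
        Matrix.cons_val_two, Matrix.tail_cons]
      refine ⟨?_, ?_, ?_, ?_⟩ <;> push_cast <;> omega
  rw [hset, Set.ncard_coe_finset, Finset.card_image_of_injOn]
  intro x _ y _ hxy
  have h1 := congrFun (Prod.ext_iff.mp hxy).1
  have e0 := h1 0; have e1 := h1 1; have e2 := h1 2
  simp only [Matrix.cons_val_zero, Matrix.cons_val_one, Matrix.head_cons,
    Matrix.cons_val_two, Matrix.tail_cons] at e0 e1 e2
  exact Prod.ext e0 (Prod.ext e1 e2)


/-- Multiplicity-freeness in the Lepowsky branching rule for
`Sp(2n) ⊇ Sp(2n-2)×Sp(2)` with `μ` supported on at most two fundamental weights, reduced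
(as at most three of the `A_k` are nonzero) to the key combinatorial statement:
`p_Σ(A₁ε₁+A₂ε₂+A₃ε₃) - p_Σ(A₁ε₁+A₂ε₂+A₃ε₃+2ε₄) ∈ {0,1}`, with value `1` precisely when
all `Aᵢ ≥ 0`, `Σ Aᵢ` is even, and `max Aᵢ ≤ ½ Σ Aᵢ`. -/
theorem lepowsky_multiplicity_free (A : Fin 3 → ℕ) :
    ((pSigma ![(A 0 : ℤ), (A 1 : ℤ), (A 2 : ℤ), 0] : ℤ) -
        pSigma ![(A 0 : ℤ), (A 1 : ℤ), (A 2 : ℤ), 2] = 0 ∨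
      (pSigma ![(A 0 : ℤ), (A 1 : ℤ), (A 2 : ℤ), 0] : ℤ) -
        pSigma ![(A 0 : ℤ), (A 1 : ℤ), (A 2 : ℤ), 2] = 1) ∧
    ((pSigma ![(A 0 : ℤ), (A 1 : ℤ), (A 2 : ℤ), 0] : ℤ) -
        pSigma ![(A 0 : ℤ), (A 1 : ℤ), (A 2 : ℤ), 2] = 1 ↔
      2 ∣ (A 0 + A 1 + A 2) ∧ ∀ i, 2 * A i ≤ A 0 + A 1 + A 2) := by
  set a := A 0 with ha
  set b := A 1 with hb
  set c := A 2 with hc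
  have hall : (∀ i, 2 * A i ≤ A 0 + A 1 + A 2) ↔
      (2*a ≤ a+b+c ∧ 2*b ≤ a+b+c ∧ 2*c ≤ a+b+c) := by
    constructor
    · intro h; exact ⟨h 0, h 1, h 2⟩
    · rintro ⟨h1, h2, h3⟩ i; fin_cases i <;> simpa [← ha, ← hb, ← hc]
  rw [hall]
  have e0 : pSigma ![(a:ℤ), b, c, 0] = ncnt a b c ((0:ℤ) + a + b + c) := pSigma_eq a b c 0
  have e2 : pSigma ![(a:ℤ), b, c, 2] = ncnt a b c ((2:ℤ) + a + b + c) := pSigma_eq a b c 2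
  rw [e0, e2]
  set s : ℤ := (0:ℤ) + a + b + c with hs
  have hs2 : (2:ℤ) + a + b + c = s + 2 := by rw [hs]; ring
  rw [hs2]
  have ht := tele a b c s
  have hD : (ncnt a b c s : ℤ) - ncnt a b c (s+2)
      = (t2 b c (s - 2*a) : ℤ) - t2 b c (s+2) := by
    omega
  rw [hD]
  by_cases hpar : 2 ∣ (a + b + c)
  · obtain ⟨m, hm⟩ := hpar
    have h1 : s - 2*(a:ℤ) = 2*((m:ℤ) - a) := by rw [hs]; push_cast; omega
    have h2 : s + 2 = 2*((m:ℤ) + 1) := by rw [hs]; push_cast; omega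
    rw [h1, h2, t2_val, t2_val]
    constructor
    · split_ifs <;> omega
    · split_ifs <;> omega
  · have h1 : ¬ (2 ∣ (s - 2*(a:ℤ))) := by rw [hs]; omega
    have h2 : ¬ (2 ∣ (s + 2)) := by rw [hs]; omega
    rw [t2_odd _ _ _ h1, t2_odd _ _ _ h2]
    refine ⟨Or.inl (by norm_num), ⟨fun h => by norm_num at h, fun ⟨h, _⟩ => absurd h hpar⟩⟩
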